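/- Let (V, σ) be a 2-dimensional symplectic vector space and let f₁, f₂, f₃ ∈ V satisfy σ(f₁,f₂) ≠ 0, σ(f₁,f₃) ≠ 0 and σ(f₂,f₃) ≠ 0. For r₁, r₂, r₃ ∈ ℝ, let A₁₂, A₂₃, A₃₁ ∈ V be the unique points with σ(f_i, A_{ij}) = r_i and σ(f_j, A_{ij}) = r_j (indices mod 3). Then the signed area of the triangle A₁₂A₂₃A₃₁, defined as (1/2)[σ(A₁₂,A₂₃) + σ(A₂₃,A₃₁) + σ(A₃₁,A₁₂)], equals (e₂₃r₁ + e₃₁r₂ + e₁₂r₃)²/(2 e₁₂ e₂₃ e₃₁), where e_{ij} := σ(f_i, f_j). -/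
import Mathlib


open Module

/-- In a 2-dimensional real symplectic vector space with `f₁, f₂, f₃` pairwise
non-orthogonal (`e_{ij} := σ(f_i,f_j) ≠ 0`), if `A₁₂, A₂₃, A₃₁` are the unique points
with `σ(f_i, A_{ij}) = r_i` and `σ(f_j, A_{ij}) = r_j`, then the signed area
`(1/2)[σ(A₁₂,A₂₃) + σ(A₂₃,A₃₁) + σ(A₃₁,A₁₂)]` of the triangle `A₁₂A₂₃A₃₁` equals
`(e₂₃r₁ + e₃₁r₂ + e₁₂r₃)²/(2 e₁₂ e₂₃ e₃₁)`. -/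
theorem signed_area_of_triangle_from_lines
    {V : Type*} [AddCommGroup V] [Module ℝ V] [FiniteDimensional ℝ V]
    (hdim : finrank ℝ V = 2)
    (σ : V →ₗ[ℝ] V →ₗ[ℝ] ℝ)
    (halt : ∀ v, σ v v = 0)
    (f₁ f₂ f₃ : V)
    (h12 : σ f₁ f₂ ≠ 0) (h13 : σ f₁ f₃ ≠ 0) (h23 : σ f₂ f₃ ≠ 0)
    (r₁ r₂ r₃ : ℝ)
    (A₁₂ A₂₃ A₃₁ : V)
    (hA₁₂ : σ f₁ A₁₂ = r₁ ∧ σ f₂ A₁₂ = r₂)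
    (hA₂₃ : σ f₂ A₂₃ = r₂ ∧ σ f₃ A₂₃ = r₃)
    (hA₃₁ : σ f₃ A₃₁ = r₃ ∧ σ f₁ A₃₁ = r₁) :
    (1 / 2) * (σ A₁₂ A₂₃ + σ A₂₃ A₃₁ + σ A₃₁ A₁₂)
      = (σ f₂ f₃ * r₁ + σ f₃ f₁ * r₂ + σ f₁ f₂ * r₃) ^ 2
          / (2 * σ f₁ f₂ * σ f₂ f₃ * σ f₃ f₁) := by
  have hskew : ∀ x y : V, σ y x = -σ x y := by
    intro x y
    have h := halt (x + y)
    simp only [map_add, LinearMap.add_apply, halt] at h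
    linarith
  -- f₁, f₂ are linearly independent
  have hli : LinearIndependent ℝ ![f₁, f₂] := by
    rw [LinearIndependent.pair_iff]
    intro a b hab
    have h1 : σ f₁ (a • f₁ + b • f₂) = 0 := by rw [hab]; simp
    have h2 : σ f₂ (a • f₁ + b • f₂) = 0 := by rw [hab]; simp
    simp only [map_add, map_smul, smul_eq_mul, halt, mul_zero, zero_add, add_zero] at h1 h2
    have h21 : σ f₂ f₁ = -σ f₁ f₂ := hskew f₁ f₂
    constructor
    · rcases mul_eq_zero.1 h2 with h | h
      · exact h
      · exact absurd (by rw [h21] at h; linarith) h12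
    · rcases mul_eq_zero.1 h1 with h | h
      · exact h
      · exact absurd h h12
  have hcard : Fintype.card (Fin 2) = finrank ℝ V := by simp [hdim]
  let b : Basis (Fin 2) ℝ V := basisOfLinearIndependentOfCardEqFinrank hli hcard
  have hb0 : b 0 = f₁ := by simp [b, coe_basisOfLinearIndependentOfCardEqFinrank]
  have hb1 : b 1 = f₂ := by simp [b, coe_basisOfLinearIndependentOfCardEqFinrank]
  -- key identity
  have key : ∀ x y : V, σ x y * σ f₁ f₂ = σ f₁ x * σ f₂ y - σ f₂ x * σ f₁ y := by
    intro x y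
    have hx : x = b.repr x 0 • f₁ + b.repr x 1 • f₂ := by
      have := b.sum_repr x
      rw [Fin.sum_univ_two, hb0, hb1] at this
      exact this.symm
    have hy : y = b.repr y 0 • f₁ + b.repr y 1 • f₂ := by
      have := b.sum_repr y
      rw [Fin.sum_univ_two, hb0, hb1] at this
      exact this.symm
    rw [hx, hy]
    simp only [map_add, map_smul, LinearMap.add_apply, LinearMap.smul_apply, smul_eq_mul,
      halt, hskew f₁ f₂]
    ring
  obtain ⟨h1A, h2A⟩ := hA₁₂
  obtain ⟨h2B, h3B⟩ := hA₂₃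
  obtain ⟨h3C, h1C⟩ := hA₃₁
  have h31 : σ f₃ f₁ = -σ f₁ f₃ := hskew f₁ f₃
  -- compute σ f₁ A₂₃
  have hs : σ f₁ A₂₃ = (σ f₁ f₃ * r₂ - σ f₁ f₂ * r₃) / σ f₂ f₃ := by
    have h := key f₃ A₂₃
    rw [h3B, h2B] at h
    field_simp
    linarith
  -- compute σ f₂ A₃₁
  have ht : σ f₂ A₃₁ = (σ f₁ f₂ * r₃ + σ f₂ f₃ * r₁) / σ f₁ f₃ := by
    have h := key f₃ A₃₁
    rw [h3C, h1C] at h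
    field_simp
    linarith
  have e1 : σ A₁₂ A₂₃ = (r₁ * σ f₂ A₂₃ - r₂ * σ f₁ A₂₃) / σ f₁ f₂ := by
    have h := key A₁₂ A₂₃
    rw [h1A, h2A] at h
    field_simp
    linarith
  have e2 : σ A₂₃ A₃₁ = (σ f₁ A₂₃ * σ f₂ A₃₁ - σ f₂ A₂₃ * σ f₁ A₃₁) / σ f₁ f₂ := by
    have h := key A₂₃ A₃₁
    field_simp
    linarith
  have e3 : σ A₃₁ A₁₂ = (σ f₁ A₃₁ * σ f₂ A₁₂ - σ f₂ A₃₁ * σ f₁ A₁₂) / σ f₁ f₂ := by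
    have h := key A₃₁ A₁₂
    field_simp
    linarith
  rw [e1, e2, e3, hs, ht, h2B, h1C, h2A, h1A, h31]
  field_simp
  ring
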